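/- The set L(T̃(x), x^n, x^{2n}−1; g(x)) ∩ K[x]_{n−1}^3 of triples (u,v,w) of polynomials of degree ≤ n−1 with T̃u + x^n v + (x^{2n}−1)w = g has exactly one element, when T is an invertible Toeplitz matrix. -/

import Mathlib

/-!
Adding the coefficients of degree `i` and `2n + i` (`i < n`) of `T̃ u + xⁿ v + (x²ⁿ - 1) w`
reduces it modulo `x²ⁿ - 1`, which leaves exactly the `i`-th entry of `T u`. Hence a syzygy
with all three degrees `< n` has `T u = 0`, so `u = 0`, and then `xⁿ v = (1 - x²ⁿ) w` forces
`v = w = 0`. The map `K[x]_{n-1}³ → K[x]_{3n-1}` is therefore an injective map between spaces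
of the same dimension `3n`, hence bijective, and `g` has exactly one preimage.
-/

open Polynomial Finset

/-- The polynomial `T̃(x)` associated to the Toeplitz matrix with entries `t_{i-j}`. -/
noncomputable def Ttilde {K : Type*} [Field K] (n : ℕ) (t : ℤ → K) : Polynomial K :=
  ∑ i ∈ Finset.range (2 * n),
    C (if i < n then t i else t ((i : ℤ) - 2 * n)) * X ^ i

namespace Polynomial

variable {K : Type*} [Field K] {n : ℕ}

lemma finrank_degreeLT : Module.finrank K K[X]_n = n := by
  rw [Module.finrank_eq_card_basis (degreeLT.basis K n), Fintype.card_fin]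

lemma mul_mem_degreeLT {m : ℕ} {a u : K[X]} (ha : a.degree ≤ m) (hu : u ∈ K[X]_n) :
    a * u ∈ K[X]_(m + n) := by
  rcases eq_or_ne a 0 with rfl | ha0
  · simp
  rw [mem_degreeLT] at hu ⊢
  push_cast
  exact (degree_mul_le a u).trans_lt
    (WithBot.add_lt_add_of_le_of_lt (degree_ne_bot.2 ha0) ha hu)

lemma coeff_mul_of_degree_lt (p : K[X]) {u : K[X]} (hu : u.degree < n) (k : ℕ) :
    (p * u).coeff k = ∑ j ∈ range n, u.coeff j * if j ≤ k then p.coeff (k - j) else 0 := by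
  rcases eq_or_ne u 0 with rfl | hu0
  · simp
  conv_lhs => rw [u.as_sum_range' n ((natDegree_lt_iff_degree_lt hu0).2 hu)]
  simp only [mul_sum, finsetSum_coeff, ← C_mul_X_pow_eq_monomial, mul_left_comm p,
    coeff_C_mul, coeff_mul_X_pow']

lemma eq_zero_of_X_pow_mul_add_X_pow_sub_one_mul_eq_zero {m : ℕ} {v w : K[X]}
    (hw : w.degree < n) (hnm : n ≤ m) (h : X ^ n * v + (X ^ m - 1) * w = 0) :
    v = 0 ∧ w = 0 := by
  have hw0 : w = 0 := by
    ext i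
    rcases lt_or_ge i n with hi | hi
    · have := congrArg (coeff · i) h
      simpa [sub_mul, coeff_X_pow_mul', show ¬ n ≤ i by omega, show ¬ m ≤ i by omega]
        using this
    · exact coeff_eq_zero_of_degree_lt (hw.trans_le (by exact_mod_cast hi))
  subst hw0
  simpa [pow_ne_zero, X_ne_zero] using h

variable (n) in
/-- The fibre of `syzygyMap n a b c` over `g` is the paper's `L(a, b, c; g) ∩ K[x]_{n-1}³`. -/
noncomputable def syzygyMap (a b c : K[X]) : K[X]_n × K[X]_n × K[X]_n →ₗ[K] K[X] :=
  (LinearMap.mulLeft K a ∘ₗ (K[X]_n).subtype).coprod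
    ((LinearMap.mulLeft K b ∘ₗ (K[X]_n).subtype).coprod
      (LinearMap.mulLeft K c ∘ₗ (K[X]_n).subtype))

@[simp]
lemma syzygyMap_apply (a b c : K[X]) (uvw : K[X]_n × K[X]_n × K[X]_n) :
    syzygyMap n a b c uvw = a * uvw.1 + b * uvw.2.1 + c * uvw.2.2 := by
  simp [syzygyMap, add_assoc]

lemma range_syzygyMap_le {m : ℕ} {a b c : K[X]} (ha : a.degree ≤ m) (hb : b.degree ≤ m)
    (hc : c.degree ≤ m) : LinearMap.range (syzygyMap n a b c) ≤ K[X]_(m + n) := by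
  rintro _ ⟨⟨u, v, w⟩, rfl⟩
  rw [syzygyMap_apply]
  exact add_mem (add_mem (mul_mem_degreeLT ha u.2) (mul_mem_degreeLT hb v.2))
    (mul_mem_degreeLT hc w.2)

lemma range_syzygyMap_eq_of_injective {a b c : K[X]} (ha : a.degree ≤ ↑(2 * n))
    (hb : b.degree ≤ ↑(2 * n)) (hc : c.degree ≤ ↑(2 * n))
    (hinj : Function.Injective (syzygyMap n a b c)) :
    LinearMap.range (syzygyMap n a b c) = K[X]_(2 * n + n) := by
  refine Submodule.eq_of_le_of_finrank_eq (range_syzygyMap_le ha hb hc) ?_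
  rw [LinearMap.finrank_range_of_inj hinj, Module.finrank_prod, Module.finrank_prod,
    finrank_degreeLT, finrank_degreeLT]
  ring

lemma existsUnique_of_syzygyMap_injective {a b c g : K[X]}
    (hinj : Function.Injective (syzygyMap n a b c))
    (hg : g ∈ LinearMap.range (syzygyMap n a b c)) :
    ∃! uvw : K[X] × K[X] × K[X], uvw.1.degree < n ∧ uvw.2.1.degree < n ∧
      uvw.2.2.degree < n ∧ a * uvw.1 + b * uvw.2.1 + c * uvw.2.2 = g := by
  obtain ⟨⟨u, v, w⟩, rfl⟩ := hg
  refine ⟨((u : K[X]), (v : K[X]), (w : K[X])), ⟨mem_degreeLT.1 u.2, mem_degreeLT.1 v.2,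
    mem_degreeLT.1 w.2, (syzygyMap_apply a b c (u, v, w)).symm⟩, ?_⟩
  rintro ⟨u', v', w'⟩ ⟨hu, hv, hw, h⟩
  have huvw := @hinj
    (⟨u', mem_degreeLT.2 hu⟩, ⟨v', mem_degreeLT.2 hv⟩, ⟨w', mem_degreeLT.2 hw⟩)
    (u, v, w) (by rw [syzygyMap_apply]; exact h)
  simp only [Prod.mk.injEq, Subtype.ext_iff] at huvw
  simp [huvw]

end Polynomial

section Toeplitz

open Matrix

variable {K : Type*} [Field K] {n : ℕ}

lemma coeff_Ttilde (t : ℤ → K) (k : ℕ) :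
    (Ttilde n t).coeff k =
      if k < 2 * n then (if k < n then t k else t ((k : ℤ) - 2 * n)) else 0 := by
  simp [Ttilde]

lemma degree_Ttilde_le (t : ℤ → K) : (Ttilde n t).degree ≤ ↑(2 * n) := by
  refine ((degree_lt_iff_coeff_zero _ _).2 fun k hk => ?_).le
  rw [coeff_Ttilde, if_neg (by omega)]

lemma coeff_Ttilde_mul_add_coeff_Ttilde_mul (t : ℤ → K) {u : K[X]} (hu : u.degree < n)
    {i : ℕ} (hi : i < n) :
    (Ttilde n t * u).coeff i + (Ttilde n t * u).coeff (2 * n + i) =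
      ∑ j ∈ range n, t ((i : ℤ) - j) * u.coeff j := by
  rw [coeff_mul_of_degree_lt _ hu, coeff_mul_of_degree_lt _ hu, ← sum_add_distrib]
  refine sum_congr rfl fun j hj => ?_
  have hj : j < n := mem_range.1 hj
  by_cases hji : j ≤ i
  · rw [if_pos hji, if_pos (by omega), coeff_Ttilde, coeff_Ttilde, if_pos (by omega),
      if_pos (by omega), if_neg (by omega)]
    push_cast [hji]; ring
  · rw [if_neg hji, if_pos (by omega), coeff_Ttilde, if_pos (by omega), if_neg (by omega)]
    push_cast [show j ≤ 2 * n + i by omega]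
    rw [show (2 * n + i - j - 2 * n : ℤ) = i - j by ring]
    ring

lemma coeff_syzygy_add_coeff (t : ℤ → K) {u v w : K[X]} (hu : u.degree < n)
    (hv : v.degree < n) (hw : w.degree < n) {i : ℕ} (hi : i < n) :
    (Ttilde n t * u + X ^ n * v + (X ^ (2 * n) - 1) * w).coeff i +
      (Ttilde n t * u + X ^ n * v + (X ^ (2 * n) - 1) * w).coeff (2 * n + i) =
      ∑ j ∈ range n, t ((i : ℤ) - j) * u.coeff j := by
  have hv' : v.coeff (n + i) = 0 := coeff_eq_zero_of_degree_lt
    (hv.trans_le (by exact_mod_cast (by omega : n ≤ n + i)))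
  have hw' : w.coeff (2 * n + i) = 0 := coeff_eq_zero_of_degree_lt
    (hw.trans_le (by exact_mod_cast (by omega : n ≤ 2 * n + i)))
  simp only [coeff_add, sub_mul, one_mul, coeff_sub, coeff_X_pow_mul',
    if_neg (show ¬ n ≤ i by omega), if_neg (show ¬ 2 * n ≤ i by omega),
    if_pos (show n ≤ 2 * n + i by omega), if_pos (show 2 * n ≤ 2 * n + i by omega),
    show 2 * n + i - n = n + i by omega, Nat.add_sub_cancel_left, hv', hw']
  linear_combination coeff_Ttilde_mul_add_coeff_Ttilde_mul t hu hi

lemma syzygyMap_Ttilde_injective {t : ℤ → K}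
    (hT : IsUnit (Matrix.of fun i j : Fin n => t ((i : ℤ) - (j : ℤ)))) :
    Function.Injective (syzygyMap n (Ttilde n t) (X ^ n) (X ^ (2 * n) - 1)) := by
  rw [← LinearMap.ker_eq_bot, LinearMap.ker_eq_bot']
  rintro ⟨u, v, w⟩ h
  rw [syzygyMap_apply] at h
  dsimp only at h
  have hTu :
      (Matrix.of fun i j : Fin n => t ((i : ℤ) - (j : ℤ))) *ᵥ degreeLTEquiv K n u = 0 := by
    ext i
    have hi := coeff_syzygy_add_coeff t (mem_degreeLT.1 u.2) (mem_degreeLT.1 v.2)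
      (mem_degreeLT.1 w.2) i.2
    rw [h, coeff_zero, zero_add,
      ← Fin.sum_univ_eq_sum_range (fun j => t ((i : ℤ) - j) * (u : K[X]).coeff j)] at hi
    simpa [Matrix.mulVec, dotProduct, degreeLTEquiv] using hi.symm
  have hu : u = 0 := by
    simpa using Matrix.mulVec_injective_iff_isUnit.2 hT (hTu.trans (Matrix.mulVec_zero _).symm)
  obtain ⟨hv, hw⟩ := eq_zero_of_X_pow_mul_add_X_pow_sub_one_mul_eq_zero (mem_degreeLT.1 w.2)
    (by omega : n ≤ 2 * n) (by simpa [hu] using h)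
  simp [hu, Subtype.ext_iff, hv, hw]

end Toeplitz

theorem stmt_7_general {K : Type*} [Field K] (n : ℕ) (t : ℤ → K)
    (T : Matrix (Fin n) (Fin n) K) (hT : T = Matrix.of fun i j : Fin n => t ((i : ℤ) - (j : ℤ)))
    (hTinv : IsUnit T)
    (g : Polynomial K) (hg : g.degree < n) :
    ∃! uvw : Polynomial K × Polynomial K × Polynomial K,
      uvw.1.degree < n ∧ uvw.2.1.degree < n ∧ uvw.2.2.degree < n ∧
      Ttilde n t * uvw.1 + X ^ n * uvw.2.1 + (X ^ (2 * n) - 1) * uvw.2.2 = g := by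
  subst hT
  have hinj := syzygyMap_Ttilde_injective hTinv
  have hXn : (X ^ n : K[X]).degree ≤ ↑(2 * n) :=
    (degree_X_pow_le n).trans (by exact_mod_cast (by omega : n ≤ 2 * n))
  have hX2n : (X ^ (2 * n) - 1 : K[X]).degree ≤ ↑(2 * n) :=
    (degree_sub_le _ _).trans (max_le (degree_X_pow_le _) (degree_one_le.trans (by simp)))
  refine existsUnique_of_syzygyMap_injective hinj ?_
  rw [range_syzygyMap_eq_of_injective (degree_Ttilde_le t) hXn hX2n hinj]
  exact degreeLT_mono (by omega) (mem_degreeLT.2 hg)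

/-- When `T` is an invertible Toeplitz matrix and `g(x)` has degree `≤ n-1`, the set
`L(T̃(x), x^n, x^{2n}-1; g(x)) ∩ K[x]_{n-1}^3` has exactly one element. -/
theorem stmt_7 {K : Type*} [Field K] (n : ℕ) (hn : 0 < n) (t : ℤ → K)
    (T : Matrix (Fin n) (Fin n) K) (hT : T = Matrix.of fun i j : Fin n => t ((i : ℤ) - (j : ℤ)))
    (hTinv : IsUnit T)
    (g : Polynomial K) (hg : g.degree < n) :
    ∃! uvw : Polynomial K × Polynomial K × Polynomial K,
      uvw.1.degree < n ∧ uvw.2.1.degree < n ∧ uvw.2.2.degree < n ∧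
      Ttilde n t * uvw.1 + X ^ n * uvw.2.1 + (X ^ (2 * n) - 1) * uvw.2.2 = g :=
  stmt_7_general n t T hT hTinv g hg
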